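/- arXiv:1807.06895 — 10 statements merged into one kernel-verified Lean document; each statement's English description precedes it below -/
import Mathlib

section
/- Let V_0, V_1, f_1 : ℤ → ℝ be sequences. Suppose the intertwining relation H_1 (A_1^{(n)})^+ = (A_1^{(n+2)})^+ H_0 holds, i.e. for every sequence ψ : ℤ → ℝ and every n ∈ ℤ, writing χ(n) = −Δψ(n) + f_1(n)ψ(n), one has −Δ²χ(n) + V_1(n)χ(n) = −(H_0ψ)(n+1) + (1 + f_1(n+2))(H_0ψ)(n). Then for all n ∈ ℤ: (i) V_1(n) = V_0(n+1) − 2Δf_1(n+1), and (ii) −Δ²f_1(n) + ΔV_0(n) − 2 f_1(n) Δf_1(n+1) = −f_1(n) V_0(n+1) + f_1(n+2) V_0(n). -/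
/-- If the intertwining relation `H₁ (A₁⁽ⁿ⁾)⁺ = (A₁⁽ⁿ⁺²⁾)⁺ H₀` holds
(stated pointwise for every sequence ψ), then the potentials and superpotential satisfy
the two discrete Darboux equations. Here Δψ(n) = ψ(n+1) − ψ(n) and
(H₀ψ)(n) = −Δ²ψ(n) + V₀(n)ψ(n). -/
theorem stmt_0 (V0 V1 f1 : ℤ → ℝ)
    (h : ∀ ψ χ : ℤ → ℝ,
      (∀ m : ℤ, χ m = -(ψ (m+1) - ψ m) + f1 m * ψ m) →
      ∀ n : ℤ,
        -(χ (n+2) - 2 * χ (n+1) + χ n) + V1 n * χ n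
          = -(-(ψ (n+3) - 2 * ψ (n+2) + ψ (n+1)) + V0 (n+1) * ψ (n+1))
            + (1 + f1 (n+2)) * (-(ψ (n+2) - 2 * ψ (n+1) + ψ n) + V0 n * ψ n)) :
    ∀ n : ℤ,
      (V1 n = V0 (n+1) - 2 * (f1 (n+2) - f1 (n+1))) ∧
      (-(f1 (n+2) - 2 * f1 (n+1) + f1 n) + (V0 (n+1) - V0 n)
          - 2 * f1 n * (f1 (n+2) - f1 (n+1))
        = -(f1 n * V0 (n+1)) + f1 (n+2) * V0 n) := by
  intro n
  -- delta sequence at n+1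
  set ψ : ℤ → ℝ := fun m => if m = n + 1 then 1 else 0 with hψ
  have e1 := h ψ (fun m => -(ψ (m+1) - ψ m) + f1 m * ψ m) (fun m => rfl) n
  have e2 := h (fun _ => 1) (fun m => -((1:ℝ) - 1) + f1 m * 1) (fun m => rfl) n
  simp only [hψ] at e1
  have h1 : n + 2 + 1 = n + 1 ↔ False := by simp only [iff_false]; omega
  have h2 : n + 1 + 1 = n + 1 ↔ False := by simp only [iff_false]; omega
  have h3 : n + 2 = n + 1 ↔ False := by simp only [iff_false]; omega
  have h4 : n + 3 = n + 1 ↔ False := by simp only [iff_false]; omega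
  have h5 : n = n + 1 ↔ False := by simp only [iff_false]; omega
  simp only [h1, h2, h3, h4, h5, if_false, if_true, if_pos rfl] at e1
  norm_num at e1 e2
  have hv : V1 n = V0 (n+1) - 2 * (f1 (n+2) - f1 (n+1)) := by linarith
  refine ⟨hv, ?_⟩
  rw [hv] at e2
  nlinarith [e2]
end

section
/- Let V_0, V_1, f_1 : ℤ → ℝ be sequences such that for all n ∈ ℤ: (i) V_1(n) = V_0(n+1) − 2Δf_1(n+1), and (ii) −Δ²f_1(n) + ΔV_0(n) − 2 f_1(n) Δf_1(n+1) = −f_1(n) V_0(n+1) + f_1(n+2) V_0(n). Then the intertwining relation holds: for every sequence ψ : ℤ → ℝ and every n ∈ ℤ, writing χ(n) = −Δψ(n) + f_1(n)ψ(n), one has −Δ²χ(n) + V_1(n)χ(n) = −(H_0ψ)(n+1) + (1 + f_1(n+2))(H_0ψ)(n). -/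
/-- Conversely, if the two discrete Darboux equations hold, then the
intertwining relation `H₁ (A₁⁽ⁿ⁾)⁺ = (A₁⁽ⁿ⁺²⁾)⁺ H₀` holds pointwise for every
sequence ψ. Here Δψ(n) = ψ(n+1) − ψ(n) and (H₀ψ)(n) = −Δ²ψ(n) + V₀(n)ψ(n). -/
theorem stmt_1 (V0 V1 f1 : ℤ → ℝ)
    (h1 : ∀ n : ℤ, V1 n = V0 (n+1) - 2 * (f1 (n+2) - f1 (n+1)))
    (h2 : ∀ n : ℤ,
      -(f1 (n+2) - 2 * f1 (n+1) + f1 n) + (V0 (n+1) - V0 n)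
          - 2 * f1 n * (f1 (n+2) - f1 (n+1))
        = -(f1 n * V0 (n+1)) + f1 (n+2) * V0 n) :
    ∀ ψ χ : ℤ → ℝ,
      (∀ m : ℤ, χ m = -(ψ (m+1) - ψ m) + f1 m * ψ m) →
      ∀ n : ℤ,
        -(χ (n+2) - 2 * χ (n+1) + χ n) + V1 n * χ n
          = -(-(ψ (n+3) - 2 * ψ (n+2) + ψ (n+1)) + V0 (n+1) * ψ (n+1))
            + (1 + f1 (n+2)) * (-(ψ (n+2) - 2 * ψ (n+1) + ψ n) + V0 n * ψ n) := by
  intro ψ χ hχ n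
  have e0 := hχ n
  have e1 := hχ (n+1)
  have e2 := hχ (n+2)
  have h2n := h2 n
  have h1n := h1 n
  have r1 : n+1+1 = n+2 := by ring
  have r2 : n+2+1 = n+3 := by ring
  rw [r1] at e1
  rw [r2] at e2
  rw [e0, e1, e2, h1n]
  linear_combination (ψ n) * h2n
end

section
/- Let V_0 : ℤ → ℝ, ε ∈ ℝ, and let ψ_1 : ℤ → ℝ be a nowhere-vanishing sequence satisfying −Δ²ψ_1(n) + V_0(n)ψ_1(n) = ε ψ_1(n+2) for all n ∈ ℤ. Set f_1(n) = Δψ_1(n)/ψ_1(n). Then for all n ∈ ℤ: −Δ²f_1(n) + ΔV_0(n) − 2 f_1(n) Δf_1(n+1) = −f_1(n) V_0(n+1) + f_1(n+2) V_0(n). -/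
/-!
Writing `ψ₁(n+1) = (1 + f₁(n)) ψ₁(n)` turns the linear second-order equation for `ψ₁` into the
first-order discrete Riccati equation `-Δf₁(n) - f₁(n) f₁(n+1) + V₀(n) = ε (1 + f₁(n)) (1 + f₁(n+1))`.
The Darboux condition is `(1 + f₁(n))` times the Riccati equation at `n + 1` minus `(1 + f₁(n+2))`
times the one at `n`: the terms in `ε` cancel.
-/

theorem riccati_of_schrodinger {V ψ f : ℤ → ℝ} {ε : ℝ} (hne : ∀ n, ψ n ≠ 0)
    (hψ : ∀ n, -(ψ (n + 2) - 2 * ψ (n + 1) + ψ n) + V n * ψ n = ε * ψ (n + 2))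
    (hf : ∀ n, f n = (ψ (n + 1) - ψ n) / ψ n) (n : ℤ) :
    -(f (n + 1) - f n) - f n * f (n + 1) + V n = ε * (1 + f n) * (1 + f (n + 1)) := by
  have h2 : n + 1 + 1 = n + 2 := by ring
  rw [hf, hf, h2]
  field_simp [hne n, hne (n + 1)]
  linear_combination ψ (n + 1) * hψ n

theorem darboux_of_riccati {V f : ℤ → ℝ} {ε : ℝ}
    (hR : ∀ n, -(f (n + 1) - f n) - f n * f (n + 1) + V n = ε * (1 + f n) * (1 + f (n + 1)))
    (n : ℤ) :
    -(f (n + 2) - 2 * f (n + 1) + f n) + (V (n + 1) - V n) - 2 * f n * (f (n + 2) - f (n + 1))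
      = -(f n * V (n + 1)) + f (n + 2) * V n := by
  have hR₁ := hR (n + 1)
  rw [show n + 1 + 1 = n + 2 by ring] at hR₁
  linear_combination (1 + f n) * hR₁ - (1 + f (n + 2)) * hR n

/-- If ψ₁ is nowhere vanishing and satisfies
−Δ²ψ₁(n) + V₀(n)ψ₁(n) = ε ψ₁(n+2), then f₁(n) = Δψ₁(n)/ψ₁(n) satisfies the
second discrete Darboux condition. -/
theorem stmt_2 (V0 : ℤ → ℝ) (ε : ℝ) (ψ1 : ℤ → ℝ)
    (hne : ∀ n : ℤ, ψ1 n ≠ 0)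
    (hψ : ∀ n : ℤ, -(ψ1 (n+2) - 2 * ψ1 (n+1) + ψ1 n) + V0 n * ψ1 n = ε * ψ1 (n+2))
    (f1 : ℤ → ℝ)
    (hf : ∀ n : ℤ, f1 n = (ψ1 (n+1) - ψ1 n) / ψ1 n) :
    ∀ n : ℤ,
      -(f1 (n+2) - 2 * f1 (n+1) + f1 n) + (V0 (n+1) - V0 n)
          - 2 * f1 n * (f1 (n+2) - f1 (n+1))
        = -(f1 n * V0 (n+1)) + f1 (n+2) * V0 n :=
  darboux_of_riccati (riccati_of_schrodinger hne hψ hf)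
end

section
/- Let V_0 : ℤ → ℝ and let φ_0 : ℤ → ℝ be a nowhere-vanishing sequence with −Δ²φ_0(n) + V_0(n)φ_0(n) = 0 for all n ∈ ℤ. Set f_1(n) = Δφ_0(n)/φ_0(n) and V_1(n) = V_0(n+1) − 2Δf_1(n+1). Then for all n ∈ ℤ: V_0(n) = Δf_1(n) + f_1(n)f_1(n+1) and V_1(n) = −Δf_1(n+1) + f_1(n+1)f_1(n+2); equivalently, for every sequence ψ : ℤ → ℝ, H_0ψ(n) equals the result of applying first the operator (−Δ + f_1(n)·) and then (Δ + f_1(n+1)·) to ψ, and H_1ψ(n) equals the result of applying first (Δ + f_1(n+1)·) and then (−Δ + f_1(n+2)·) to ψ. -/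
/-!
The zero mode `φ₀` turns the second-order equation `H₀ φ₀ = 0` into the discrete Riccati equation
`V₀ = Δf₁ + f₁ f₁(· + 1)` for its logarithmic difference `f₁ = Δφ₀ / φ₀`. Once the potentials are
written in this Riccati form, both factorizations are polynomial identities in the values of `ψ`
and `f₁`, and the shift of `V₀` by `−2Δf₁` exactly flips the sign of the `Δf₁` term.
-/

section Factorization

variable {R : Type*} [CommRing R]

theorem schrodinger_eq_raising_comp_lowering (ψ χ f : ℤ → R)
    (hχ : ∀ m : ℤ, χ m = -(ψ (m+1) - ψ m) + f m * ψ m) (n : ℤ) :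
    -(ψ (n+2) - 2 * ψ (n+1) + ψ n) + ((f (n+1) - f n) + f n * f (n+1)) * ψ n
      = (χ (n+1) - χ n) + f (n+1) * χ n := by
  rw [hχ n, hχ (n+1), show n + 1 + 1 = n + 2 by ring]
  ring

theorem schrodinger_eq_lowering_comp_raising (ψ η g : ℤ → R)
    (hη : ∀ m : ℤ, η m = (ψ (m+1) - ψ m) + g m * ψ m) (n : ℤ) :
    -(ψ (n+2) - 2 * ψ (n+1) + ψ n) + (-(g (n+1) - g n) + g n * g (n+1)) * ψ n
      = -(η (n+1) - η n) + g (n+1) * η n := by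
  rw [hη n, hη (n+1), show n + 1 + 1 = n + 2 by ring]
  ring

end Factorization

theorem riccati_of_schrodinger_eq_zero {K : Type*} [Field K] (V φ f : ℤ → K)
    (hne : ∀ n : ℤ, φ n ≠ 0)
    (hφ : ∀ n : ℤ, -(φ (n+2) - 2 * φ (n+1) + φ n) + V n * φ n = 0)
    (hf : ∀ n : ℤ, f n = (φ (n+1) - φ n) / φ n) (n : ℤ) :
    V n = (f (n+1) - f n) + f n * f (n+1) := by
  have hφn := hne n
  have hφn1 := hne (n+1)
  rw [hf n, hf (n+1), show n + 1 + 1 = n + 2 by ring]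
  field_simp
  linear_combination φ (n+1) * hφ n

/-- For a nowhere-vanishing zero mode φ₀ of H₀ and f₁ = Δφ₀/φ₀,
V₁(n) = V₀(n+1) − 2Δf₁(n+1), one has the factorizations
V₀(n) = Δf₁(n) + f₁(n)f₁(n+1), V₁(n) = −Δf₁(n+1) + f₁(n+1)f₁(n+2), and
equivalently H₀ = (Δ + f₁(n+1))(−Δ + f₁(n)), H₁ = (−Δ + f₁(n+2))(Δ + f₁(n+1)). -/
theorem stmt_5 (V0 : ℤ → ℝ) (φ0 : ℤ → ℝ)
    (hne : ∀ n : ℤ, φ0 n ≠ 0)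
    (hφ0 : ∀ n : ℤ, -(φ0 (n+2) - 2 * φ0 (n+1) + φ0 n) + V0 n * φ0 n = 0)
    (f1 : ℤ → ℝ)
    (hf : ∀ n : ℤ, f1 n = (φ0 (n+1) - φ0 n) / φ0 n)
    (V1 : ℤ → ℝ)
    (hV1 : ∀ n : ℤ, V1 n = V0 (n+1) - 2 * (f1 (n+2) - f1 (n+1))) :
    (∀ n : ℤ, V0 n = (f1 (n+1) - f1 n) + f1 n * f1 (n+1)) ∧
    (∀ n : ℤ, V1 n = -(f1 (n+2) - f1 (n+1)) + f1 (n+1) * f1 (n+2)) ∧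
    (∀ ψ χ : ℤ → ℝ, (∀ m : ℤ, χ m = -(ψ (m+1) - ψ m) + f1 m * ψ m) →
      ∀ n : ℤ, -(ψ (n+2) - 2 * ψ (n+1) + ψ n) + V0 n * ψ n
        = (χ (n+1) - χ n) + f1 (n+1) * χ n) ∧
    (∀ ψ η : ℤ → ℝ, (∀ m : ℤ, η m = (ψ (m+1) - ψ m) + f1 (m+1) * ψ m) →
      ∀ n : ℤ, -(ψ (n+2) - 2 * ψ (n+1) + ψ n) + V1 n * ψ n
        = -(η (n+1) - η n) + f1 (n+2) * η n) := by
  have hV0 := riccati_of_schrodinger_eq_zero V0 φ0 f1 hne hφ0 hf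
  have hV1' : ∀ n : ℤ, V1 n = -(f1 (n+2) - f1 (n+1)) + f1 (n+1) * f1 (n+2) := by
    intro n
    rw [hV1 n, hV0 (n+1), show n + 1 + 1 = n + 2 by ring]
    ring
  refine ⟨hV0, hV1', fun ψ χ hχ n => ?_, fun ψ η hη n => ?_⟩
  · rw [hV0 n]
    exact schrodinger_eq_raising_comp_lowering ψ χ f1 hχ n
  · have h := schrodinger_eq_lowering_comp_raising ψ η (fun m => f1 (m+1)) hη n
    rw [show n + 1 + 1 = n + 2 by ring] at h
    rwa [hV1' n]
end

section
/- Let V_0 : ℤ → ℝ, ε ∈ ℝ with ε ≠ −1, and let ψ_1 : ℤ → ℝ be a sequence. Define w(n) = (1+ε)^n ψ_1(n). Then ψ_1 satisfies −Δ²ψ_1(n) + V_0(n)ψ_1(n) = ε ψ_1(n+2) for all n ∈ ℤ if and only if w satisfies −Δ²w(n) + (1+ε)V_0(n)w(n) = ε w(n) for all n ∈ ℤ. -/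
/-- For ε ≠ −1 and w(n) = (1+ε)ⁿψ₁(n) (integer powers), ψ₁ satisfies
−Δ²ψ₁ + V₀ψ₁ = εψ₁(·+2) iff w satisfies −Δ²w + (1+ε)V₀w = εw. -/
theorem stmt_7 (V0 : ℤ → ℝ) (ε : ℝ) (hε : ε ≠ -1) (ψ1 : ℤ → ℝ)
    (w : ℤ → ℝ)
    (hw : ∀ n : ℤ, w n = (1 + ε) ^ n * ψ1 n) :
    (∀ n : ℤ, -(ψ1 (n+2) - 2 * ψ1 (n+1) + ψ1 n) + V0 n * ψ1 n = ε * ψ1 (n+2)) ↔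
    (∀ n : ℤ, -(w (n+2) - 2 * w (n+1) + w n) + (1 + ε) * V0 n * w n = ε * w n) := by
  have ha : (1 + ε) ≠ 0 := by
    intro h; apply hε; linarith
  constructor
  · intro h n
    have h1 := h n
    rw [hw (n+2), hw (n+1), hw n, zpow_add₀ ha n 2, zpow_add₀ ha n 1]
    have h2 : (1 + ε) ^ (2:ℤ) = (1+ε)*(1+ε) := by
      rw [show (2:ℤ) = 1 + 1 by norm_num, zpow_add₀ ha, zpow_one]
    rw [h2, zpow_one]
    linear_combination ((1+ε)^n * (1+ε)) * h1
  · intro h n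
    have h1 := h n
    rw [hw (n+2), hw (n+1), hw n, zpow_add₀ ha n 2, zpow_add₀ ha n 1] at h1
    have h2 : (1 + ε) ^ (2:ℤ) = (1+ε)*(1+ε) := by
      rw [show (2:ℤ) = 1 + 1 by norm_num, zpow_add₀ ha, zpow_one]
    rw [h2, zpow_one] at h1
    have hpn : (1+ε)^n ≠ 0 := zpow_ne_zero _ ha
    apply mul_left_cancel₀ (mul_ne_zero hpn ha)
    linear_combination h1
end

section
/- Let V_0 : ℤ → ℝ and let ψ_1 : ℤ → ℝ be a nowhere-vanishing sequence satisfying −Δ²ψ_1(n) + V_0(n)ψ_1(n) = −ψ_1(n+2) for all n ∈ ℤ (the case ε = −1). Set f_1(n) = Δψ_1(n)/ψ_1(n) and V_1(n) = V_0(n+1) − 2Δf_1(n+1). Then V_1(n) = V_0(n+2) for all n ∈ ℤ. -/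
/-- In the case ε = −1, i.e. −Δ²ψ₁ + V₀ψ₁ = −ψ₁(·+2) with ψ₁ nowhere
vanishing, setting f₁ = Δψ₁/ψ₁ and V₁(n) = V₀(n+1) − 2Δf₁(n+1) yields
V₁(n) = V₀(n+2). -/
theorem stmt_8 (V0 : ℤ → ℝ) (ψ1 : ℤ → ℝ)
    (hne : ∀ n : ℤ, ψ1 n ≠ 0)
    (hψ : ∀ n : ℤ, -(ψ1 (n+2) - 2 * ψ1 (n+1) + ψ1 n) + V0 n * ψ1 n = -ψ1 (n+2))
    (f1 : ℤ → ℝ)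
    (hf : ∀ n : ℤ, f1 n = (ψ1 (n+1) - ψ1 n) / ψ1 n)
    (V1 : ℤ → ℝ)
    (hV1 : ∀ n : ℤ, V1 n = V0 (n+1) - 2 * (f1 (n+2) - f1 (n+1))) :
    ∀ n : ℤ, V1 n = V0 (n+2) := by
  have key : ∀ m : ℤ, f1 m = (1 - V0 m) / 2 - 1 := by
    intro m
    have h := hψ m
    have h2 : ψ1 (m+1) = (1 - V0 m) / 2 * ψ1 m := by linarith
    rw [hf, h2]
    field_simp [hne m]
  intro n
  rw [hV1 n, key (n+2), key (n+1)]
  ring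
end

section
/- Let κ ∈ ℝ with 0 < |κ| < 1, and let ψ_1 : ℤ → ℝ be given by ψ_1(n) = (1+κ)^{−n} + (1−κ)^{−n} (integer powers of the positive reals 1+κ, 1−κ). Then: (i) −Δ²ψ_1(n) = −κ² ψ_1(n+2) for all n ∈ ℤ; (ii) f_1(n) = Δψ_1(n)/ψ_1(n) equals (κ/(1−κ²))·((1+κ)^{n+1} − (1−κ)^{n+1})/((1+κ)^n + (1−κ)^n); and (iii) the Darboux-transformed potential V_1(n) = 0 − 2Δf_1(n+1) equals −8κ²(1−κ²)^n / [((1+κ)^{n+1} + (1−κ)^{n+1})((1+κ)^{n+2} + (1−κ)^{n+2})] for all n ∈ ℤ. -/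
/-- For 0 < |κ| < 1 and ψ₁(n) = (1+κ)⁻ⁿ + (1−κ)⁻ⁿ (integer powers):
(i) −Δ²ψ₁(n) = −κ²ψ₁(n+2);
(ii) f₁(n) = Δψ₁(n)/ψ₁(n) = (κ/(1−κ²))((1+κ)ⁿ⁺¹ − (1−κ)ⁿ⁺¹)/((1+κ)ⁿ + (1−κ)ⁿ);
(iii) V₁(n) = 0 − 2Δf₁(n+1)
       = −8κ²(1−κ²)ⁿ/[((1+κ)ⁿ⁺¹ + (1−κ)ⁿ⁺¹)((1+κ)ⁿ⁺² + (1−κ)ⁿ⁺²)]. -/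
theorem stmt_12 (κ : ℝ) (hκ0 : 0 < |κ|) (hκ1 : |κ| < 1)
    (ψ1 : ℤ → ℝ)
    (hψ : ∀ n : ℤ, ψ1 n = (1 + κ) ^ (-n) + (1 - κ) ^ (-n))
    (f1 : ℤ → ℝ)
    (hf : ∀ n : ℤ, f1 n = (ψ1 (n+1) - ψ1 n) / ψ1 n)
    (V1 : ℤ → ℝ)
    (hV1 : ∀ n : ℤ, V1 n = 0 - 2 * (f1 (n+2) - f1 (n+1))) :
    (∀ n : ℤ, -(ψ1 (n+2) - 2 * ψ1 (n+1) + ψ1 n) = -κ^2 * ψ1 (n+2)) ∧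
    (∀ n : ℤ, f1 n = (κ / (1 - κ^2)) *
      ((1 + κ) ^ (n+1) - (1 - κ) ^ (n+1)) / ((1 + κ) ^ n + (1 - κ) ^ n)) ∧
    (∀ n : ℤ, V1 n = -8 * κ^2 * (1 - κ^2) ^ n /
      (((1 + κ) ^ (n+1) + (1 - κ) ^ (n+1)) * ((1 + κ) ^ (n+2) + (1 - κ) ^ (n+2)))) := by
  obtain ⟨hm1, hp1⟩ := abs_lt.mp hκ1
  have ha : (0:ℝ) < 1 + κ := by linarith
  have hb : (0:ℝ) < 1 - κ := by linarith
  have ha' : (1 + κ : ℝ) ≠ 0 := ha.ne'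
  have hb' : (1 - κ : ℝ) ≠ 0 := hb.ne'
  have hza : ∀ m : ℤ, (0:ℝ) < (1+κ)^m := fun m => zpow_pos ha m
  have hzb : ∀ m : ℤ, (0:ℝ) < (1-κ)^m := fun m => zpow_pos hb m
  have hab : (1 - κ^2 : ℝ) ≠ 0 := by nlinarith
  have h2 : ∀ n : ℤ, f1 n = (κ / (1 - κ^2)) *
      ((1 + κ) ^ (n+1) - (1 - κ) ^ (n+1)) / ((1 + κ) ^ n + (1 - κ) ^ n) := by
    intro n
    have hden : (0:ℝ) < ψ1 n := by
      rw [hψ]; exact add_pos (hza _) (hzb _)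
    rw [hf]
    rw [div_eq_div_iff hden.ne' (add_pos (hza n) (hzb n)).ne']
    simp only [hψ, neg_add, zpow_neg, zpow_add₀ ha', zpow_add₀ hb', zpow_one]
    have hX := (hza n).ne'
    have hY := (hzb n).ne'
    field_simp
    ring
  refine ⟨?_, h2, ?_⟩
  · intro n
    simp only [hψ]
    rw [show -(n+2) = -n + -1 + -1 by ring, show -(n+1) = -n + -1 by ring]
    simp only [zpow_add₀ ha', zpow_add₀ hb', zpow_neg, zpow_one]
    have hX := (hza n).ne'
    have hY := (hzb n).ne'
    field_simp
    ring
  · intro n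
    have pa2 : (1+κ:ℝ)^(2:ℤ) = (1+κ)*(1+κ) := by
      rw [show (2:ℤ) = 1+1 by norm_num, zpow_add₀ ha', zpow_one]
    have pb2 : (1-κ:ℝ)^(2:ℤ) = (1-κ)*(1-κ) := by
      rw [show (2:ℤ) = 1+1 by norm_num, zpow_add₀ hb', zpow_one]
    have hX := (hza n).ne'
    have hY := (hzb n).ne'
    have hS1 : ((1+κ)^n*(1+κ) + (1-κ)^n*(1-κ) : ℝ) ≠ 0 := by positivity
    have hS2 : ((1+κ)^n*((1+κ)*(1+κ)) + (1-κ)^n*((1-κ)*(1-κ)) : ℝ) ≠ 0 := by positivity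
    rw [hV1, h2 (n+2), h2 (n+1)]
    simp only [show ((1:ℝ) - κ^2) = (1+κ)*(1-κ) by ring, mul_zpow]
    simp only [zpow_add₀ ha', zpow_add₀ hb', zpow_one, pa2, pb2]
    field_simp
    ring
end

section
/- Let V_0, f : ℤ → ℝ with Δf(n) + f(n)f(n+1) = V_0(n) for all n ∈ ℤ, and let u : ℤ → ℝ be a nowhere-vanishing sequence satisfying Δu(n) = f(n)u(n) + f(n+1)u(n+1) + 1 for all n ∈ ℤ. Then the sequence g(n) = f(n) + 1/u(n) also satisfies the discrete Riccati equation: Δg(n) + g(n)g(n+1) = V_0(n) for all n ∈ ℤ. -/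
/- The defect of g = f + 1/u in the Riccati equation at n is
(u n - u (n+1) + f n * u n + f (n+1) * u (n+1) + 1) / (u n * u (n+1)),
whose numerator vanishes by the equation for u. -/

theorem riccati_add_inv_of_eq {a b V x y : ℝ} (hx : x ≠ 0) (hy : y ≠ 0)
    (hab : (b - a) + a * b = V) (hxy : y - x = a * x + b * y + 1) :
    ((b + 1 / y) - (a + 1 / x)) + (a + 1 / x) * (b + 1 / y) = V := by
  rw [← hab]
  field_simp
  linear_combination -hxy

/-- If f solves the discrete Riccati equation
Δf(n) + f(n)f(n+1) = V₀(n) and u is nowhere vanishing with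
Δu(n) = f(n)u(n) + f(n+1)u(n+1) + 1, then g(n) = f(n) + 1/u(n) also solves the
discrete Riccati equation. -/
theorem stmt_15 (V0 f : ℤ → ℝ)
    (hf : ∀ n : ℤ, (f (n+1) - f n) + f n * f (n+1) = V0 n)
    (u : ℤ → ℝ)
    (hune : ∀ n : ℤ, u n ≠ 0)
    (hu : ∀ n : ℤ, u (n+1) - u n = f n * u n + f (n+1) * u (n+1) + 1)
    (g : ℤ → ℝ)
    (hg : ∀ n : ℤ, g n = f n + 1 / u n) :
    ∀ n : ℤ, (g (n+1) - g n) + g n * g (n+1) = V0 n := by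
  intro n
  rw [hg n, hg (n+1)]
  exact riccati_add_inv_of_eq (hune n) (hune (n+1)) (hf n) (hu n)
end

section
/- Let V_0 : ℤ → ℝ, ε_1, ε_i ∈ ℝ. Let ψ_1 : ℤ → ℝ be nowhere vanishing with −Δ²ψ_1(n) + V_0(n)ψ_1(n) = ε_1 ψ_1(n+2) for all n, set f_1(n) = Δψ_1(n)/ψ_1(n) and V_1(n) = V_0(n+1) − 2Δf_1(n+1). Let ψ_i : ℤ → ℝ satisfy −Δ²ψ_i(n) + V_0(n)ψ_i(n) = ε_i ψ_i(n+2) for all n. Then the sequence ψ̃_i(n) := −Δψ_i(n) + f_1(n)ψ_i(n), which equals −(ψ_1(n)ψ_i(n+1) − ψ_1(n+1)ψ_i(n))/ψ_1(n) = −C(ψ_1, ψ_i)(n)/ψ_1(n), satisfies −Δ²ψ̃_i(n) + V_1(n)ψ̃_i(n) = ε_i ψ̃_i(n+2) for all n ∈ ℤ. -/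
/-!
Writing `ψ₁(n+3)` and `ψᵢ(n+3)` through the equations at `n + 1`, the transformed equation at `n`
becomes, after clearing the denominators `ψ₁(n) ψ₁(n+1) ψ₁(n+2)`, a linear combination of the
equations for `ψ₁` and `ψᵢ` at `n` and `n + 1`.
-/

variable {K : Type*} [Field K]

def casoratian (ψ₁ ψ₂ : ℤ → K) (n : ℤ) : K := ψ₁ n * ψ₂ (n + 1) - ψ₁ (n + 1) * ψ₂ n

def SolvesSchrodinger (V : ℤ → K) (ε : K) (ψ : ℤ → K) : Prop :=
  ∀ n : ℤ, -(ψ (n + 2) - 2 * ψ (n + 1) + ψ n) + V n * ψ n = ε * ψ (n + 2)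

def logDiff (ψ : ℤ → K) (n : ℤ) : K := (ψ (n + 1) - ψ n) / ψ n

def darbouxPotential (V ψ₁ : ℤ → K) (n : ℤ) : K :=
  V (n + 1) - 2 * (logDiff ψ₁ (n + 2) - logDiff ψ₁ (n + 1))

def darbouxTransform (ψ₁ ψ : ℤ → K) (n : ℤ) : K := -(ψ (n + 1) - ψ n) + logDiff ψ₁ n * ψ n

theorem darbouxTransform_eq_casoratian {ψ₁ : ℤ → K} (ψ : ℤ → K) {n : ℤ} (h : ψ₁ n ≠ 0) :
    darbouxTransform ψ₁ ψ n = -(casoratian ψ₁ ψ n / ψ₁ n) := by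
  unfold darbouxTransform logDiff casoratian
  field_simp
  ring

theorem SolvesSchrodinger.darbouxTransform {V : ℤ → K} {ε₁ ε : K} {ψ₁ ψ : ℤ → K}
    (h₁ : SolvesSchrodinger V ε₁ ψ₁) (hne : ∀ n, ψ₁ n ≠ 0) (h : SolvesSchrodinger V ε ψ) :
    SolvesSchrodinger (darbouxPotential V ψ₁) ε (darbouxTransform ψ₁ ψ) := by
  intro n
  have index₁ : n + 1 + 1 = n + 2 := by ring
  have index₂ : n + 1 + 2 = n + 3 := by ring
  have index₃ : n + 2 + 1 = n + 3 := by ring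
  have h₁n := h₁ n
  have hn := h n
  have h₁n' := h₁ (n + 1)
  have hn' := h (n + 1)
  rw [index₁, index₂] at h₁n' hn'
  have := hne n
  have := hne (n + 1)
  have := hne (n + 2)
  simp only [darbouxTransform_eq_casoratian ψ (hne _), darbouxPotential, logDiff, casoratian,
    index₁, index₃]
  field_simp
  linear_combination
    (-(ψ₁ n * ψ₁ (n + 1) * ψ₁ (n + 2))) * hn' + (ψ₁ n * ψ₁ (n + 1) * ψ₁ (n + 3)) * hn
      - (ψ₁ (n + 1) * ψ₁ (n + 3) * ψ n) * h₁n + (ψ₁ (n + 1) * ψ₁ (n + 2) * ψ n) * h₁n'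

/-- If ψ₁ is a nowhere-vanishing solution of
−Δ²ψ₁ + V₀ψ₁ = ε₁ψ₁(·+2), f₁ = Δψ₁/ψ₁, V₁(n) = V₀(n+1) − 2Δf₁(n+1), and ψᵢ
solves −Δ²ψᵢ + V₀ψᵢ = εᵢψᵢ(·+2), then ψ̃ᵢ = −Δψᵢ + f₁ψᵢ = −C(ψ₁,ψᵢ)/ψ₁ solves
−Δ²ψ̃ᵢ + V₁ψ̃ᵢ = εᵢψ̃ᵢ(·+2). -/
theorem stmt_16 (V0 : ℤ → ℝ) (ε1 εi : ℝ) (ψ1 ψi : ℤ → ℝ)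
    (hne : ∀ n : ℤ, ψ1 n ≠ 0)
    (hψ1 : ∀ n : ℤ, -(ψ1 (n+2) - 2 * ψ1 (n+1) + ψ1 n) + V0 n * ψ1 n = ε1 * ψ1 (n+2))
    (f1 : ℤ → ℝ)
    (hf : ∀ n : ℤ, f1 n = (ψ1 (n+1) - ψ1 n) / ψ1 n)
    (V1 : ℤ → ℝ)
    (hV1 : ∀ n : ℤ, V1 n = V0 (n+1) - 2 * (f1 (n+2) - f1 (n+1)))
    (hψi : ∀ n : ℤ, -(ψi (n+2) - 2 * ψi (n+1) + ψi n) + V0 n * ψi n = εi * ψi (n+2))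
    (ψti : ℤ → ℝ)
    (hψti : ∀ n : ℤ, ψti n = -(ψi (n+1) - ψi n) + f1 n * ψi n) :
    (∀ n : ℤ, ψti n = -((ψ1 n * ψi (n+1) - ψ1 (n+1) * ψi n) / ψ1 n)) ∧
    (∀ n : ℤ, -(ψti (n+2) - 2 * ψti (n+1) + ψti n) + V1 n * ψti n = εi * ψti (n+2)) := by
  obtain rfl : f1 = logDiff ψ1 := funext hf
  obtain rfl : V1 = darbouxPotential V0 ψ1 := funext hV1
  obtain rfl : ψti = darbouxTransform ψ1 ψi := funext hψti
  exact ⟨fun n => darbouxTransform_eq_casoratian ψi (hne n),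
    SolvesSchrodinger.darbouxTransform hψ1 hne hψi⟩
end

section
/- Let V_0 : ℤ → ℝ, ε_1, ε_2 ∈ ℝ, and let ψ_1, ψ_2 : ℤ → ℝ satisfy −Δ²ψ_j(n) + V_0(n)ψ_j(n) = ε_j ψ_j(n+2) for all n (j = 1, 2). Assume ψ_1(n) ≠ 0 and the Casoratian C(ψ_1, ψ_2)(n) = ψ_1(n)ψ_2(n+1) − ψ_1(n+1)ψ_2(n) ≠ 0 for all n. Set f_1(n) = Δψ_1(n)/ψ_1(n), ψ̃_2(n) = −Δψ_2(n) + f_1(n)ψ_2(n), and f_2(n) = Δψ̃_2(n)/ψ̃_2(n). Then for all n ∈ ℤ: f_2(n) = (ψ_1(n)/ψ_1(n+1)) · (ψ_1(n+2)ψ_2(n+1) − ψ_1(n+1)ψ_2(n+2)) / (ψ_1(n+1)ψ_2(n) − ψ_1(n)ψ_2(n+1)) − 1 = (ψ_1(n)/ψ_1(n+1)) · (C(ψ_1, ψ_2)(n+1)/C(ψ_1, ψ_2)(n)) − 1. -/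
/-- With ψ₁, ψ₂ solutions of −Δ²ψⱼ + V₀ψⱼ = εⱼψⱼ(·+2), ψ₁ nowhere
vanishing and the Casoratian C(ψ₁,ψ₂)(n) = ψ₁(n)ψ₂(n+1) − ψ₁(n+1)ψ₂(n) nowhere
vanishing, setting f₁ = Δψ₁/ψ₁, ψ̃₂ = −Δψ₂ + f₁ψ₂ and f₂ = Δψ̃₂/ψ̃₂, one has
f₂(n) = (ψ₁(n)/ψ₁(n+1))·(ψ₁(n+2)ψ₂(n+1) − ψ₁(n+1)ψ₂(n+2))/(ψ₁(n+1)ψ₂(n) − ψ₁(n)ψ₂(n+1)) − 1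
       = (ψ₁(n)/ψ₁(n+1))·(C(ψ₁,ψ₂)(n+1)/C(ψ₁,ψ₂)(n)) − 1. -/
theorem stmt_17 (V0 : ℤ → ℝ) (ε1 ε2 : ℝ) (ψ1 ψ2 : ℤ → ℝ)
    (hψ1 : ∀ n : ℤ, -(ψ1 (n+2) - 2 * ψ1 (n+1) + ψ1 n) + V0 n * ψ1 n = ε1 * ψ1 (n+2))
    (hψ2 : ∀ n : ℤ, -(ψ2 (n+2) - 2 * ψ2 (n+1) + ψ2 n) + V0 n * ψ2 n = ε2 * ψ2 (n+2))
    (hne : ∀ n : ℤ, ψ1 n ≠ 0)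
    (hCne : ∀ n : ℤ, ψ1 n * ψ2 (n+1) - ψ1 (n+1) * ψ2 n ≠ 0)
    (f1 : ℤ → ℝ)
    (hf1 : ∀ n : ℤ, f1 n = (ψ1 (n+1) - ψ1 n) / ψ1 n)
    (ψt2 : ℤ → ℝ)
    (hψt2 : ∀ n : ℤ, ψt2 n = -(ψ2 (n+1) - ψ2 n) + f1 n * ψ2 n)
    (f2 : ℤ → ℝ)
    (hf2 : ∀ n : ℤ, f2 n = (ψt2 (n+1) - ψt2 n) / ψt2 n) :
    ∀ n : ℤ,
      f2 n = (ψ1 n / ψ1 (n+1)) *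
          ((ψ1 (n+2) * ψ2 (n+1) - ψ1 (n+1) * ψ2 (n+2)) /
            (ψ1 (n+1) * ψ2 n - ψ1 n * ψ2 (n+1))) - 1 ∧
      f2 n = (ψ1 n / ψ1 (n+1)) *
          ((ψ1 (n+1) * ψ2 (n+2) - ψ1 (n+2) * ψ2 (n+1)) /
            (ψ1 n * ψ2 (n+1) - ψ1 (n+1) * ψ2 n)) - 1 := by
  intro n
  have hC := hCne n
  have hC' := hCne (n+1)
  have h1 := hne n
  have h1' := hne (n+1)
  have key : ∀ m : ℤ, ψt2 m = -(ψ1 m * ψ2 (m+1) - ψ1 (m+1) * ψ2 m) / ψ1 m := by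
    intro m
    rw [hψt2, hf1]
    field_simp [hne m]
    ring
  have hψt2n : ψt2 n = -(ψ1 n * ψ2 (n+1) - ψ1 (n+1) * ψ2 n) / ψ1 n := key n
  have hψt2n1 : ψt2 (n+1) = -(ψ1 (n+1) * ψ2 (n+2) - ψ1 (n+2) * ψ2 (n+1)) / ψ1 (n+1) := by
    rw [key (n+1)]; norm_num [show n+1+1 = n+2 by ring]
  have hψt2ne : ψt2 n ≠ 0 := by
    rw [hψt2n]; exact div_ne_zero (neg_ne_zero.mpr hC) h1
  have hratio : ψt2 (n+1) / ψt2 n =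
      (ψ1 n / ψ1 (n+1)) *
        ((ψ1 (n+1) * ψ2 (n+2) - ψ1 (n+2) * ψ2 (n+1)) /
          (ψ1 n * ψ2 (n+1) - ψ1 (n+1) * ψ2 n)) := by
    rw [hψt2n, hψt2n1, div_div_div_comm, neg_div_neg_eq, div_div_eq_mul_div]
    ring
  have hf2n : f2 n = ψt2 (n+1) / ψt2 n - 1 := by
    rw [hf2, sub_div, div_self hψt2ne]
  have main : f2 n = (ψ1 n / ψ1 (n+1)) *
        ((ψ1 (n+1) * ψ2 (n+2) - ψ1 (n+2) * ψ2 (n+1)) /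
          (ψ1 n * ψ2 (n+1) - ψ1 (n+1) * ψ2 n)) - 1 := by
    rw [hf2n, hratio]
  refine ⟨?_, main⟩
  rw [main]
  rw [show ψ1 (n+2) * ψ2 (n+1) - ψ1 (n+1) * ψ2 (n+2)
      = -(ψ1 (n+1) * ψ2 (n+2) - ψ1 (n+2) * ψ2 (n+1)) by ring,
    show ψ1 (n+1) * ψ2 n - ψ1 n * ψ2 (n+1)
      = -(ψ1 n * ψ2 (n+1) - ψ1 (n+1) * ψ2 n) by ring,
    neg_div_neg_eq]
end
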